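/- arXiv:0901.0323 — 4 statements merged into one kernel-verified Lean document; each statement's English description precedes it below -/
import Mathlib

section
/- If ρ_i = (a)_i ζ^i / i! for i ≥ 0 (where (a)_i = a(a+1)⋯(a+i-1) is the Pochhammer symbol) and ρ_i = 1 for i ≤ -1, then for any partition λ with ℓ(λ) ≤ N, ∏_{i=1}^{N} ρ_{λ_i - i + N} = (∏_{i=0}^{N-1} (a)_i/i!) · ζ^{|λ| + N(N-1)/2} · (a-1+N)_λ / (N)_λ, where (x)_λ := ∏_{(i,j)∈λ}(x - i + j). -/
/-!
Write `t_n = (a)_n ζ^n / n!`. Splitting `(a)_{m+k} = (a)_m (a+m)_k` and `(m+k)! = m! (m+1)_k` at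
`m = N - i`, `k = λ_i` factors `ρ_{λ_i - i + N}` as `t_{N-i}` times `ζ^{λ_i}` times the ratio of the
products of `a - 1 + N - i + j` and of `N - i + j` over the boxes `(i, j)` of row `i` of `λ`.
The `t_{N-i}` multiply to `∏ (a)_i/i! · ζ^{N(N-1)/2}`, and rows beyond `ℓ(λ)` are empty.
-/

open Finset

section
variable {K : Type*} [Field K]

/-- The `n`-th term `(a)_n ζ^n / n!` of the binomial series of `(1 - ζ)^{-a}`. -/
def binomialSeriesTerm (a ζ : K) (n : ℕ) : K :=
  (∏ j ∈ range n, (a + j)) * ζ ^ n / n.factorial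

theorem binomialSeriesTerm_add (a ζ : K) (m k : ℕ) :
    binomialSeriesTerm a ζ (m + k) =
      binomialSeriesTerm a ζ m *
        ((∏ j ∈ range k, (a + m + j)) * ζ ^ k / ∏ j ∈ range k, ((m : K) + 1 + j)) := by
  have hfact : ((m + k).factorial : K) = m.factorial * ∏ j ∈ range k, ((m : K) + 1 + j) := by
    rw [← Nat.factorial_mul_ascFactorial, Nat.ascFactorial_eq_prod_range]
    push_cast
    rfl
  simp only [binomialSeriesTerm, prod_range_add, pow_add, hfact, Nat.cast_add, add_assoc]
  ring

theorem prod_binomialSeriesTerm_reflect (a ζ : K) (N : ℕ) :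
    ∏ i ∈ range N, binomialSeriesTerm a ζ (N - (i + 1)) =
      (∏ i ∈ range N, (∏ j ∈ range i, (a + j)) / i.factorial) * ζ ^ (N * (N - 1) / 2) := by
  calc ∏ i ∈ range N, binomialSeriesTerm a ζ (N - (i + 1))
      = ∏ i ∈ range N, binomialSeriesTerm a ζ i := by
        rw [← prod_range_reflect (binomialSeriesTerm a ζ)]
        exact prod_congr rfl fun i _ => by rw [Nat.sub_sub, Nat.add_comm 1 i]
    _ = ∏ i ∈ range N, ((∏ j ∈ range i, (a + j)) / i.factorial * ζ ^ i) :=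
        prod_congr rfl fun i _ => by rw [binomialSeriesTerm]; ring
    _ = _ := by rw [prod_mul_distrib, prod_pow_eq_pow_sum, sum_range_id]

end

theorem stmt3_general (N ℓ : ℕ) (lam : ℕ → ℕ)
    (hsupp : ∀ i, 0 < lam i ↔ i < ℓ) (hℓN : ℓ ≤ N) (a ζ : ℂ)
    (ρ : ℤ → ℂ)
    (hρpos : ∀ n : ℕ,
      ρ n = (∏ j ∈ range n, (a + (j : ℂ))) * ζ ^ n / (Nat.factorial n : ℂ)) :
    (∏ i ∈ range N, ρ ((lam i : ℤ) + (N : ℤ) - ((i : ℤ) + 1))) =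
      (∏ i ∈ range N, (∏ j ∈ range i, (a + (j : ℂ))) / (Nat.factorial i : ℂ)) *
        ζ ^ ((∑ i ∈ range ℓ, lam i) + N * (N - 1) / 2) *
        (∏ i ∈ range ℓ, ∏ j ∈ range (lam i),
          (a - 1 + (N : ℂ) - ((i : ℂ) + 1) + ((j : ℂ) + 1))) /
        (∏ i ∈ range ℓ, ∏ j ∈ range (lam i),
          ((N : ℂ) - ((i : ℂ) + 1) + ((j : ℂ) + 1))) := by
  set row : ℕ → ℂ := fun i =>
    (∏ j ∈ range (lam i), (a - 1 + (N : ℂ) - ((i : ℂ) + 1) + ((j : ℂ) + 1))) /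
      (∏ j ∈ range (lam i), ((N : ℂ) - ((i : ℂ) + 1) + ((j : ℂ) + 1))) * ζ ^ lam i
  have hfactor : ∀ i ∈ range N, ρ ((lam i : ℤ) + (N : ℤ) - ((i : ℤ) + 1)) =
      binomialSeriesTerm a ζ (N - (i + 1)) * row i := by
    intro i hi
    have hiN : i + 1 ≤ N := mem_range.mp hi
    have hindex : (lam i : ℤ) + (N : ℤ) - ((i : ℤ) + 1) = ((N - (i + 1) + lam i : ℕ) : ℤ) := by
      push_cast [Nat.cast_sub hiN]
      ring
    rw [hindex, hρpos, ← binomialSeriesTerm, binomialSeriesTerm_add]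
    have hnum : ∀ j : ℕ, a + ((N - (i + 1) : ℕ) : ℂ) + j =
        a - 1 + (N : ℂ) - ((i : ℂ) + 1) + ((j : ℂ) + 1) := fun j => by
      push_cast [Nat.cast_sub hiN]; ring
    have hden : ∀ j : ℕ, ((N - (i + 1) : ℕ) : ℂ) + 1 + j =
        (N : ℂ) - ((i : ℂ) + 1) + ((j : ℂ) + 1) := fun j => by
      push_cast [Nat.cast_sub hiN]; ring
    simp only [row, hnum, hden]
    ring
  have hrow : ∏ i ∈ range N, row i = ∏ i ∈ range ℓ, row i := by
    refine (prod_subset (range_subset_range.mpr hℓN) fun i _ hi => ?_).symm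
    have : lam i = 0 := Nat.eq_zero_of_not_pos fun h => hi (mem_range.mpr ((hsupp i).mp h))
    simp [row, this]
  rw [prod_congr rfl hfactor, prod_mul_distrib, prod_binomialSeriesTerm_reflect, hrow]
  simp only [row, prod_mul_distrib, prod_div_distrib, prod_pow_eq_pow_sum, pow_add]
  ring

/-- For `ρ_i = (a)_i ζ^i / i!` (`i ≥ 0`), `ρ_i = 1` (`i ≤ -1`), and a partition `λ`
with `ℓ(λ) ≤ N`:
`∏_{i=1}^N ρ_{λ_i-i+N} = (∏_{i=0}^{N-1} (a)_i/i!) · ζ^{|λ| + N(N-1)/2} · (a-1+N)_λ/(N)_λ`,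
where `(x)_λ = ∏_{(i,j)∈λ}(x - i + j)` is the extended Pochhammer symbol. -/
theorem stmt3 (N ℓ : ℕ) (lam : ℕ → ℕ) (hanti : Antitone lam)
    (hsupp : ∀ i, 0 < lam i ↔ i < ℓ) (hℓN : ℓ ≤ N) (a ζ : ℂ)
    (ρ : ℤ → ℂ)
    (hρpos : ∀ n : ℕ,
      ρ n = (∏ j ∈ range n, (a + (j : ℂ))) * ζ ^ n / (Nat.factorial n : ℂ))
    (hρneg : ∀ i : ℤ, i < 0 → ρ i = 1) :
    (∏ i ∈ range N, ρ ((lam i : ℤ) + (N : ℤ) - ((i : ℤ) + 1))) =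
      (∏ i ∈ range N, (∏ j ∈ range i, (a + (j : ℂ))) / (Nat.factorial i : ℂ)) *
        ζ ^ ((∑ i ∈ range ℓ, lam i) + N * (N - 1) / 2) *
        (∏ i ∈ range ℓ, ∏ j ∈ range (lam i),
          (a - 1 + (N : ℂ) - ((i : ℂ) + 1) + ((j : ℂ) + 1))) /
        (∏ i ∈ range ℓ, ∏ j ∈ range (lam i),
          ((N : ℂ) - ((i : ℂ) + 1) + ((j : ℂ) + 1))) :=
  stmt3_general N ℓ lam hsupp hℓN a ζ ρ hρpos
end

section
/- Let ρ_+(z) = Σ_{i≥0} ρ_i z^i be a formal power series with nonzero coefficients, and let a_1,…,a_N, b_1,…,b_N be complex numbers (with the a_i pairwise distinct and b_i pairwise distinct, all in the domain of convergence). Then Σ_{ℓ(λ)≤N} (∏_{i=1}^{N} ρ_{λ_i - i + N}) s_λ(a_1,…,a_N) s_λ(b_1,…,b_N) = det(ρ_+(a_i b_j))_{1≤i,j≤N} / (Δ(a)Δ(b)), where Δ denotes the Vandermonde determinant ∏_{i<j}(a_i - a_j). -/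
/-!
Write `ρ_+(a_i b_j) = Σ_k ρ_k a_i^k b_j^k`. Multilinearity in the columns expands
`det (ρ_+(a_i b_j))` over tuples of exponents. A tuple with a repeated exponent gives two equal
columns, and every other tuple is a strictly decreasing `k` composed with a unique permutation,
whose sign recombines the remaining products into `det (a_i^{k_j})`; this is Cauchy–Binet.
Strictly decreasing `k` are exactly `λ + δ` with `λ` a partition and `δ = (N-1, …, 1, 0)`, and
since `ρ` has finite support only finitely many `λ` contribute.
-/

open Finset Matrix Equiv

section

variable {R κ : Type*} [CommRing R] {n : ℕ}

theorem det_of_sum_mul_mul_eq_sum_pi [DecidableEq κ] (s : Finset κ) (c : κ → R)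
    (u v : Fin n → κ → R) :
    det (of fun i j => ∑ k ∈ s, c k * u i k * v j k) =
      ∑ r ∈ Fintype.piFinset fun _ => s,
        (∏ j, c (r j) * v j (r j)) * det (of fun i j => u i (r j)) := by
  have hcols : (of fun i j => ∑ k ∈ s, c k * u i k * v j k)ᵀ =
      fun j => ∑ k ∈ s, (c k * v j k) • fun i => u i k := by
    ext j i
    simp only [transpose_apply, of_apply, Finset.sum_apply, Pi.smul_apply, smul_eq_mul]
    exact sum_congr rfl fun k _ => by ring
  rw [← det_transpose, hcols]
  refine (detRowAlternating.toMultilinearMap.map_sum_finset _ _).trans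
    (sum_congr rfl fun r _ => ?_)
  rw [← det_transpose (of fun i j => u i (r j))]
  exact det_mul_column (fun j => c (r j) * v j (r j)) (of fun j i => u i (r j))

theorem sum_perm_prod_mul_det_comp (c : κ → R) (u v : Fin n → κ → R) (k : Fin n → κ) :
    ∑ σ : Perm (Fin n), (∏ j, c (k (σ j)) * v j (k (σ j))) * det (of fun i j => u i (k (σ j))) =
      (∏ t, c (k t)) * det (of fun i j => u i (k j)) * det (of fun i j => v i (k j)) := by
  have hu : ∀ σ : Perm (Fin n), det (of fun i j => u i (k (σ j))) =
      Perm.sign σ * det (of fun i j => u i (k j)) := fun σ =>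
    det_permute' σ (of fun i j => u i (k j))
  have hv : det (of fun i j => v i (k j)) =
      ∑ σ : Perm (Fin n), Perm.sign σ * ∏ j, v j (k (σ j)) := by
    rw [← det_transpose, det_apply']
    rfl
  simp only [hu, prod_mul_distrib, fun σ : Perm (Fin n) => Equiv.prod_comp σ (fun t => c (k t)),
    hv, mul_sum]
  refine sum_congr rfl fun σ _ => ?_
  ring

variable [LinearOrder κ]

theorem exists_strictAnti_comp_perm_eq {r : Fin n → κ} (hr : Function.Injective r) :
    ∃ k : Fin n → κ, StrictAnti k ∧ ∃ σ : Perm (Fin n), k ∘ σ = r := by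
  set τ : Perm (Fin n) := Tuple.sort r * Fin.revPerm
  have hanti : Antitone (r ∘ τ) := (Tuple.monotone_sort r).comp_antitone Fin.rev_anti
  refine ⟨r ∘ τ, hanti.strictAnti_of_injective (hr.comp τ.injective), τ⁻¹, ?_⟩
  ext x
  simp

theorem eq_of_strictAnti_comp_perm_eq {k k' : Fin n → κ} (hk : StrictAnti k)
    (hk' : StrictAnti k') {σ σ' : Perm (Fin n)} (h : k ∘ σ = k' ∘ σ') : k = k' ∧ σ = σ' := by
  have hσ : (k ∘ σ) ∘ ⇑σ⁻¹ = k := by ext; simp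
  have hσ' : (k ∘ σ) ∘ ⇑σ'⁻¹ = k' := by ext; simp [h]
  have hkk' : k = k' := calc
    k = (k ∘ σ) ∘ ⇑σ⁻¹ := hσ.symm
    _ = (k ∘ σ) ∘ ⇑σ'⁻¹ :=
      Tuple.unique_antitone (by rw [hσ]; exact hk.antitone) (by rw [hσ']; exact hk'.antitone)
    _ = k' := hσ'
  subst hkk'
  exact ⟨rfl, Equiv.ext fun x => hk.injective (congrFun h x)⟩

theorem det_of_sum_mul_mul_eq_sum_strictAnti (s : Finset κ) (c : κ → R) (u v : Fin n → κ → R) :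
    det (of fun i j => ∑ k ∈ s, c k * u i k * v j k) =
      ∑ k ∈ (Fintype.piFinset fun _ => s).filter StrictAnti,
        (∏ t, c (k t)) * det (of fun i j => u i (k j)) * det (of fun i j => v i (k j)) := by
  simp_rw [det_of_sum_mul_mul_eq_sum_pi, ← sum_perm_prod_mul_det_comp, ← sum_product']
  symm
  refine sum_of_injOn (fun p => p.1 ∘ p.2) ?_ ?_ ?_ fun _ _ => rfl
  · rintro ⟨k, σ⟩ hkσ ⟨k', σ'⟩ hkσ' h
    simp only [coe_product, Set.mem_prod, coe_filter, Set.mem_ofPred_eq] at hkσ hkσ'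
    obtain ⟨rfl, rfl⟩ := eq_of_strictAnti_comp_perm_eq hkσ.1.2 hkσ'.1.2 h
    rfl
  · rintro ⟨k, σ⟩ hkσ
    simp only [coe_product, Set.mem_prod, coe_filter, Set.mem_ofPred_eq,
      Fintype.mem_piFinset] at hkσ
    simp [hkσ.1.1]
  · intro r hrs hr
    have hnotinj : ¬ Function.Injective r := by
      rintro hinj
      obtain ⟨k, hk, σ, rfl⟩ := exists_strictAnti_comp_perm_eq hinj
      refine hr ⟨(k, σ), ?_, rfl⟩
      simp only [Fintype.mem_piFinset, Function.comp_apply] at hrs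
      simpa [hk] using fun t => by simpa using hrs (σ⁻¹ t)
    obtain ⟨i, j, hij, hne⟩ := Function.not_injective_iff.mp hnotinj
    rw [det_zero_of_column_eq hne fun l => by simp [hij], mul_zero]

end

theorem StrictAnti.apply_add_le_apply_add {n : ℕ} {k : Fin n → ℕ} (hk : StrictAnti k)
    {i j : Fin n} (hij : i ≤ j) : k j + j ≤ k i + i := by
  obtain ⟨i, hi⟩ := i
  obtain ⟨j, hj⟩ := j
  simp only [Fin.mk_le_mk] at hij ⊢
  induction j, hij using Nat.le_induction with
  | base => rfl
  | succ j _ ih =>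
    have hstep : k ⟨j + 1, hj⟩ < k ⟨j, by omega⟩ := hk (Fin.mk_lt_mk.mpr j.lt_succ_self)
    have := ih (by omega)
    omega

theorem StrictAnti.sub_le_apply {n : ℕ} {k : Fin n → ℕ} (hk : StrictAnti k) (t : Fin n) :
    n - 1 - t ≤ k t := by
  have ht := t.isLt
  have := hk.apply_add_le_apply_add (i := t) (j := ⟨n - 1, by omega⟩)
    (Fin.le_def.mpr (by dsimp; omega))
  dsimp at this
  omega

def antitoneEquivStrictAnti (n : ℕ) :
    {f : Fin n → ℕ // Antitone f} ≃ {k : Fin n → ℕ // StrictAnti k} where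
  toFun f := ⟨fun t => f.1 t + (n - 1 - t), fun i j hij => by
    have := f.2 hij.le
    have : (i : ℕ) < j := hij
    dsimp only
    omega⟩
  invFun k := ⟨fun t => k.1 t - (n - 1 - t), fun i j hij => by
    have := k.2.apply_add_le_apply_add hij
    have := k.2.sub_le_apply i
    have := k.2.sub_le_apply j
    dsimp only
    omega⟩
  left_inv f := by ext t; simp
  right_inv k := by ext t; have := k.2.sub_le_apply t; simp; omega

theorem tsum_subtype_eq_sum_filter {α β : Type*} [AddCommMonoid α] [TopologicalSpace α]
    {p : β → Prop} [DecidablePred p] (s : Finset β) {f : β → α}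
    (hf : ∀ x, p x → x ∉ s → f x = 0) :
    ∑' x : {x // p x}, f x = ∑ x ∈ s.filter p, f x := by
  rw [tsum_eq_sum (s := s.subtype p) fun x hx => hf x x.2 (by simpa using hx),
    sum_subtype_eq_sum_filter]

theorem stmt5_general (N M : ℕ) (ρ : ℕ → ℂ)
    (hsupp : ∀ k, M ≤ k → ρ k = 0) (a b : Fin N → ℂ) :
    (∑' lam : {f : Fin N → ℕ // Antitone f},
        (∏ t : Fin N, ρ (lam.1 t + (N - 1 - (t : ℕ)))) *
          (Matrix.det (Matrix.of fun i j : Fin N => a i ^ (lam.1 j + (N - 1 - (j : ℕ)))) /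
            ∏ i : Fin N, ∏ j ∈ Finset.univ.filter (fun j => i < j), (a i - a j)) *
          (Matrix.det (Matrix.of fun i j : Fin N => b i ^ (lam.1 j + (N - 1 - (j : ℕ)))) /
            ∏ i : Fin N, ∏ j ∈ Finset.univ.filter (fun j => i < j), (b i - b j))) =
      Matrix.det (Matrix.of fun i j : Fin N => ∑ k ∈ range M, ρ k * (a i * b j) ^ k) /
        ((∏ i : Fin N, ∏ j ∈ Finset.univ.filter (fun j => i < j), (a i - a j)) *
          ∏ i : Fin N, ∏ j ∈ Finset.univ.filter (fun j => i < j), (b i - b j)) := by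
  set Δa := ∏ i : Fin N, ∏ j ∈ univ.filter (fun j => i < j), (a i - a j)
  set Δb := ∏ i : Fin N, ∏ j ∈ univ.filter (fun j => i < j), (b i - b j)
  set F : (Fin N → ℕ) → ℂ := fun k => (∏ t, ρ (k t)) *
    (det (of fun i j => a i ^ k j) / Δa) * (det (of fun i j => b i ^ k j) / Δb)
  have hF : ∀ k, StrictAnti k → k ∉ Fintype.piFinset (fun _ => range M) → F k = 0 := by
    intro k _ hk
    obtain ⟨t, ht⟩ : ∃ t, M ≤ k t := by simpa using hk
    simp only [F, prod_eq_zero (f := fun t => ρ (k t)) (mem_univ t) (hsupp _ ht), zero_mul]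
  have hdet : (of fun i j : Fin N => ∑ k ∈ range M, ρ k * (a i * b j) ^ k) =
      of fun i j => ∑ k ∈ range M, ρ k * a i ^ k * b j ^ k := by
    ext i j
    simp only [of_apply, mul_pow, mul_assoc]
  calc _ = ∑' k : {k : Fin N → ℕ // StrictAnti k}, F k :=
        (antitoneEquivStrictAnti N).tsum_eq (F ·)
    _ = ∑ k ∈ (Fintype.piFinset fun _ => range M).filter StrictAnti, F k :=
      tsum_subtype_eq_sum_filter _ hF
    _ = _ := by
      rw [hdet, det_of_sum_mul_mul_eq_sum_strictAnti, sum_div]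
      exact sum_congr rfl fun k _ => by simp only [F]; ring

/-- For `ρ_+(z) = Σ_{k<M} ρ_k z^k` with nonzero coefficients and distinct `a_i`, `b_j`:
`Σ_{ℓ(λ)≤N} (∏_{i=1}^N ρ_{λ_i-i+N}) s_λ(a) s_λ(b) = det(ρ_+(a_i b_j))/(Δ(a)Δ(b))`,
where `s_λ` is given by the bialternant formula and `Δ` is the Vandermonde
determinant `∏_{i<j}(a_i - a_j)`. -/
theorem stmt5 (N M : ℕ) (ρ : ℕ → ℂ) (hρne : ∀ k, k < M → ρ k ≠ 0)
    (hsupp : ∀ k, M ≤ k → ρ k = 0) (a b : Fin N → ℂ)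
    (ha : Function.Injective a) (hb : Function.Injective b) :
    (∑' lam : {f : Fin N → ℕ // Antitone f},
        (∏ t : Fin N, ρ (lam.1 t + (N - 1 - (t : ℕ)))) *
          (Matrix.det (Matrix.of fun i j : Fin N => a i ^ (lam.1 j + (N - 1 - (j : ℕ)))) /
            ∏ i : Fin N, ∏ j ∈ Finset.univ.filter (fun j => i < j), (a i - a j)) *
          (Matrix.det (Matrix.of fun i j : Fin N => b i ^ (lam.1 j + (N - 1 - (j : ℕ)))) /
            ∏ i : Fin N, ∏ j ∈ Finset.univ.filter (fun j => i < j), (b i - b j))) =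
      Matrix.det (Matrix.of fun i j : Fin N => ∑ k ∈ range M, ρ k * (a i * b j) ^ k) /
        ((∏ i : Fin N, ∏ j ∈ Finset.univ.filter (fun j => i < j), (a i - a j)) *
          ∏ i : Fin N, ∏ j ∈ Finset.univ.filter (fun j => i < j), (b i - b j)) :=
  stmt5_general N M ρ hsupp a b
end

section
/- Andréief identity: for functions φ_1,…,φ_N and ψ_1,…,ψ_N integrable against a measure μ on ℝ, ∫⋯∫ det(φ_i(x_j))_{i,j} · det(ψ_k(x_l))_{k,l} dμ(x_1)⋯dμ(x_N) = N! · det(∫ φ_i(x) ψ_j(x) dμ(x))_{1≤i,j≤N}. -/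
/-!
Expanding both determinants by the Leibniz formula writes the integrand as a signed sum over pairs
of permutations `(σ, τ)` of products `∏ j, φ (σ j) (x j) * ψ (τ j) (x j)`. By Fubini each term
integrates to `∏ j, A (σ j) (τ j)` with `A i j = ∫ φ i * ψ j`, and for fixed `τ` the signed sum
over `σ` is `det A` after reindexing `σ ↦ σ * τ⁻¹`; the `N!` choices of `τ` give the factor `N!`.
-/

open Finset MeasureTheory Equiv

namespace Matrix

variable {n R : Type*} [Fintype n] [DecidableEq n] [CommRing R]

theorem det_mul_det_eq_sum_sum_sign_mul_sign (B C : Matrix n n R) :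
    B.det * C.det = ∑ σ : Perm n, ∑ τ : Perm n,
      ((Perm.sign σ : ℤ) : R) * (Perm.sign τ : ℤ) * ∏ j, B (σ j) j * C (τ j) j := by
  simp only [det_apply', Fintype.sum_mul_sum, prod_mul_distrib]
  exact sum_congr rfl fun σ _ => sum_congr rfl fun τ _ => by ring

theorem sum_sign_mul_sign_mul_prod_eq_det (A : Matrix n n R) (τ : Perm n) :
    ∑ σ : Perm n, ((Perm.sign σ : ℤ) : R) * (Perm.sign τ : ℤ) * ∏ j, A (σ j) (τ j) = A.det := by
  rw [det_apply']
  refine Fintype.sum_equiv (Equiv.mulRight τ⁻¹) _ _ fun σ => ?_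
  have hprod : ∏ j, A (σ j) (τ j) = ∏ j, A ((σ * τ⁻¹) j) j := by
    rw [← Equiv.prod_comp τ fun j => A ((σ * τ⁻¹) j) j]
    simp
  rw [hprod, coe_mulRight, Perm.sign_mul, Perm.sign_inv]
  push_cast
  ring

theorem sum_sum_sign_mul_sign_mul_prod_eq_factorial_mul_det (A : Matrix n n R) :
    ∑ σ : Perm n, ∑ τ : Perm n, ((Perm.sign σ : ℤ) : R) * (Perm.sign τ : ℤ) *
      ∏ j, A (σ j) (τ j) = (Fintype.card n).factorial * A.det := by
  rw [sum_comm]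
  simp only [sum_sign_mul_sign_mul_prod_eq_det, sum_const, Finset.card_univ, Fintype.card_perm,
    nsmul_eq_mul]

end Matrix

theorem integral_det_mul_det {α 𝕜 ι : Type*} [MeasurableSpace α] [RCLike 𝕜] [Fintype ι]
    [DecidableEq ι] (μ : Measure α) [SigmaFinite μ] (φ ψ : ι → α → 𝕜)
    (hint : ∀ i j, Integrable (fun x => φ i x * ψ j x) μ) :
    ∫ x : ι → α, (Matrix.of fun i j => φ i (x j)).det * (Matrix.of fun i j => ψ i (x j)).det
        ∂(Measure.pi fun _ => μ) =
      (Fintype.card ι).factorial * (Matrix.of fun i j => ∫ x, φ i x * ψ j x ∂μ).det := by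
  have hterm : ∀ σ τ : Perm ι, Integrable (fun x : ι → α => ∏ j, φ (σ j) (x j) * ψ (τ j) (x j))
      (Measure.pi fun _ => μ) := fun σ τ => .fintype_prod fun j => hint (σ j) (τ j)
  simp_rw [Matrix.det_mul_det_eq_sum_sum_sign_mul_sign, Matrix.of_apply]
  rw [integral_finsetSum _ fun σ _ => integrable_finsetSum _ fun τ _ => (hterm σ τ).const_mul _,
    ← Matrix.sum_sum_sign_mul_sign_mul_prod_eq_factorial_mul_det]
  refine sum_congr rfl fun σ _ => ?_
  rw [integral_finsetSum _ fun τ _ => (hterm σ τ).const_mul _]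
  refine sum_congr rfl fun τ _ => ?_
  rw [integral_const_mul, integral_fintype_prod_eq_prod (fun j x => φ (σ j) x * ψ (τ j) x)]
  rfl

theorem stmt7_general (N : ℕ) (μ : Measure ℝ) [SigmaFinite μ] (φ ψ : Fin N → ℝ → ℂ)
    (hint : ∀ i j, Integrable (fun x => φ i x * ψ j x) μ) :
    (∫ x : Fin N → ℝ,
        Matrix.det (Matrix.of fun i j : Fin N => φ i (x j)) *
          Matrix.det (Matrix.of fun k l : Fin N => ψ k (x l))
        ∂(Measure.pi fun _ => μ)) =
      (N.factorial : ℂ) *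
        Matrix.det (Matrix.of fun i j : Fin N => ∫ x : ℝ, φ i x * ψ j x ∂μ) := by
  simpa using integral_det_mul_det μ φ ψ hint

/-- Andréief identity:
`∫⋯∫ det(φ_i(x_j)) det(ψ_k(x_l)) dμ(x_1)⋯dμ(x_N) = N! det(∫ φ_i ψ_j dμ)`. -/
theorem stmt7 (N : ℕ) (μ : Measure ℝ) [SigmaFinite μ] (φ ψ : Fin N → ℝ → ℂ)
    (hmeasφ : ∀ i, AEStronglyMeasurable (φ i) μ)
    (hmeasψ : ∀ i, AEStronglyMeasurable (ψ i) μ)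
    (hint : ∀ i j, Integrable (fun x => φ i x * ψ j x) μ) :
    (∫ x : Fin N → ℝ,
        Matrix.det (Matrix.of fun i j : Fin N => φ i (x j)) *
          Matrix.det (Matrix.of fun k l : Fin N => ψ k (x l))
        ∂(Measure.pi fun _ => μ)) =
      (N.factorial : ℂ) *
        Matrix.det (Matrix.of fun i j : Fin N => ∫ x : ℝ, φ i x * ψ j x ∂μ) :=
  stmt7_general N μ φ ψ hint
end

section
/- Jacobi–Trudi determinantal evaluation of the Schur polynomial matches the bialternant formula: for a partition λ with ℓ(λ) ≤ N and variables a_1,…,a_N with the h_i taken as complete homogeneous symmetric polynomials in a, det(h_{λ_i - i + j})_{1≤i,j≤ℓ(λ)} · Δ(a) = det(a_i^{λ_j - j + N})_{1≤i,j≤N}, where Δ(a) = ∏_{i<j}(a_i - a_j). -/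
/-!
With `H(t) = ∑ₖ hₖ tᵏ = ∏ₛ (1 - aₛ t)⁻¹`, the polynomial `Pⱼ(t) = ∏_{s ≠ j} (1 - aₛ t)` has degree
`< N` and satisfies `Pⱼ H = (1 - aⱼ t)⁻¹`, so `∑ₖ [tᵏ]Pⱼ · h_{β-k} = aⱼ^β` for every `β`. In matrix
form this reads `C · JT_N(λ)ᵀ = A(λ)`, where `C_{jk} = [t^{N-1-k}]Pⱼ` and
`A(λ)_{ij} = aᵢ^{λⱼ + N - 1 - j}`. For `λ = 0` the Jacobi–Trudi matrix is unitriangular, so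
`det C = det A(0) = Δ(a)`, a projective Vandermonde determinant. Finally, when `λ` vanishes beyond
`ℓ`, the `N × N` Jacobi–Trudi matrix is block upper triangular with the `ℓ × ℓ` one and a
unitriangular block on the diagonal.
-/

open Finset
open scoped Polynomial PowerSeries Matrix

noncomputable section

namespace Schur

variable {R : Type*} [CommRing R] {N : ℕ} (a : Fin N → R)

def completeHomogeneous (k : ℕ) : R :=
  ∑ m ∈ Nat.antidiagonalTuple N k, ∏ s, a s ^ m s

lemma completeHomogeneous_zero : completeHomogeneous a 0 = 1 := by
  simp [completeHomogeneous, Nat.antidiagonalTuple_zero_right]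

lemma mk_completeHomogeneous :
    PowerSeries.mk (completeHomogeneous a) = ∏ s, PowerSeries.mk (a s ^ ·) := by
  ext d
  rw [PowerSeries.coeff_mk, PowerSeries.coeff_prod, completeHomogeneous]
  symm
  refine sum_equiv Finsupp.equivFunOnFinite (fun l => ?_) (fun l _ => ?_)
  · simp [Nat.mem_antidiagonalTuple]
  · simp

lemma mk_pow_mul_one_sub_C_mul_X (c : R) :
    PowerSeries.mk (c ^ ·) * (1 - PowerSeries.C c * PowerSeries.X) = 1 := by
  simpa [PowerSeries.rescale_mk, PowerSeries.rescale_X] using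
    congrArg (PowerSeries.rescale c) (PowerSeries.mk_one_mul_one_sub_eq_one (S := R))

def cofactor (j : Fin N) : R[X] :=
  ∏ s ∈ univ.erase j, (1 - Polynomial.C (a s) * Polynomial.X)

lemma natDegree_cofactor_lt (j : Fin N) : (cofactor a j).natDegree < N := by
  have hdeg : (cofactor a j).natDegree ≤ (univ.erase j).card := by
    refine (Polynomial.natDegree_prod_le _ _).trans ?_
    rw [card_eq_sum_ones]
    exact sum_le_sum fun s _ => by compute_degree
  rw [card_erase_of_mem (mem_univ j), card_univ, Fintype.card_fin] at hdeg
  have hN := j.pos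
  omega

lemma cofactor_mul_mk_completeHomogeneous (j : Fin N) :
    (cofactor a j : R⟦X⟧) * PowerSeries.mk (completeHomogeneous a) = PowerSeries.mk (a j ^ ·) := by
  rw [mk_completeHomogeneous, ← mul_prod_erase univ _ (mem_univ j), mul_left_comm, cofactor,
    ← Polynomial.coeToPowerSeries.ringHom_apply, map_prod, ← prod_mul_distrib]
  convert mul_one _
  refine prod_eq_one fun s _ => ?_
  rw [mul_comm, ← mk_pow_mul_one_sub_C_mul_X (a s)]
  simp [Polynomial.coeToPowerSeries.ringHom_apply, Polynomial.coe_C, Polynomial.coe_X]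

lemma sum_coeff_cofactor_mul_completeHomogeneous (j : Fin N) (β : ℕ) :
    ∑ k : Fin N, (cofactor a j).coeff k *
      (if (k : ℕ) ≤ β then completeHomogeneous a (β - k) else 0) = a j ^ β := by
  have hcoeff := congrArg (PowerSeries.coeff β) (cofactor_mul_mk_completeHomogeneous a j)
  rw [PowerSeries.coeff_mk, PowerSeries.coeff_mul, Nat.sum_antidiagonal_eq_sum_range_succ_mk]
    at hcoeff
  simp only [Polynomial.coeff_coe, PowerSeries.coeff_mk] at hcoeff
  rw [← hcoeff, Fin.sum_univ_eq_sum_range (fun k => (cofactor a j).coeff k *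
    (if k ≤ β then completeHomogeneous a (β - k) else 0))]
  have hmin : range (min N (β + 1)) ⊆ range (β + 1) := range_subset_range.2 (min_le_right _ _)
  rw [← sum_subset (range_subset_range.2 (min_le_left N (β + 1))), ← sum_subset hmin]
  · refine sum_congr rfl fun k hk => ?_
    rw [mem_range] at hk
    rw [if_pos (by omega)]
  · intro k hk hk'
    rw [mem_range] at hk hk'
    rw [Polynomial.coeff_eq_zero_of_natDegree_lt ((natDegree_cofactor_lt a j).trans_le
      (by omega)), zero_mul]
  · intro k hk hk'
    rw [mem_range] at hk hk'
    rw [if_neg (by omega), mul_zero]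

def jacobiTrudi (lam : ℕ → ℕ) (n : ℕ) : Matrix (Fin n) (Fin n) R :=
  Matrix.of fun i j =>
    if (i : ℕ) ≤ lam i + j then completeHomogeneous a (lam i + j - i) else 0

def alternant (lam : ℕ → ℕ) : Matrix (Fin N) (Fin N) R :=
  Matrix.of fun i j => a i ^ (lam j + (N - 1 - j))

def cofactorMatrix : Matrix (Fin N) (Fin N) R :=
  Matrix.of fun j k => (cofactor a j).coeff (N - 1 - k)

lemma cofactorMatrix_mul_jacobiTrudi_transpose (lam : ℕ → ℕ) :
    cofactorMatrix a * (jacobiTrudi a lam N)ᵀ = alternant a lam := by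
  ext j j'
  rw [alternant, Matrix.of_apply, ← sum_coeff_cofactor_mul_completeHomogeneous a j,
    Matrix.mul_apply]
  refine Fintype.sum_equiv Fin.revPerm _ _ fun k => ?_
  have hk := k.isLt
  have hj' := j'.isLt
  simp only [cofactorMatrix, jacobiTrudi, Matrix.transpose_apply, Matrix.of_apply,
    Fin.revPerm_apply, Fin.val_rev]
  have hidx : N - (k + 1) = N - 1 - k := by omega
  have hdiff : lam j' + (N - 1 - j') - (N - 1 - k) = lam j' + k - j' := by omega
  have hcond : N - 1 - k ≤ lam j' + (N - 1 - j') ↔ j' ≤ lam j' + k := by omega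
  rw [hidx, hdiff]
  simp only [hcond]

lemma det_jacobiTrudi_zero (n : ℕ) : (jacobiTrudi a 0 n).det = 1 := by
  rw [Matrix.det_of_isUpperTriangular]
  · simp [jacobiTrudi, completeHomogeneous_zero]
  · intro i j hji
    simp only [jacobiTrudi, Matrix.of_apply, Pi.zero_apply, zero_add]
    exact if_neg (not_le.2 hji)

lemma det_jacobiTrudi_add (lam : ℕ → ℕ) (ℓ m : ℕ) (hlam : ∀ i, ℓ ≤ i → lam i = 0) :
    (jacobiTrudi a lam (ℓ + m)).det = (jacobiTrudi a lam ℓ).det := by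
  have hblocks : (jacobiTrudi a lam (ℓ + m)).submatrix finSumFinEquiv finSumFinEquiv =
      Matrix.fromBlocks (jacobiTrudi a lam ℓ)
        ((jacobiTrudi a lam (ℓ + m)).submatrix (Fin.castAdd m) (Fin.natAdd ℓ))
        0 (jacobiTrudi a 0 m) := by
    ext (i | i) (j | j)
    · simp [jacobiTrudi]
    · simp
    · have hji : ¬ ℓ + (i : ℕ) ≤ j := by omega
      simp [jacobiTrudi, hlam, hji]
    · simp [jacobiTrudi, hlam, Nat.add_sub_add_left]
  rw [← Matrix.det_submatrix_equiv_self finSumFinEquiv, hblocks, Matrix.det_fromBlocks_zero₂₁,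
    det_jacobiTrudi_zero, mul_one]

lemma det_alternant_eq_det_cofactorMatrix_mul (lam : ℕ → ℕ) :
    (alternant a lam).det = (cofactorMatrix a).det * (jacobiTrudi a lam N).det := by
  rw [← cofactorMatrix_mul_jacobiTrudi_transpose, Matrix.det_mul, Matrix.det_transpose]

lemma det_alternant_eq_det_jacobiTrudi_mul (lam : ℕ → ℕ) :
    (alternant a lam).det = (jacobiTrudi a lam N).det * (alternant a 0).det := by
  rw [det_alternant_eq_det_cofactorMatrix_mul, det_alternant_eq_det_cofactorMatrix_mul,
    det_jacobiTrudi_zero, mul_one, mul_comm]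

lemma det_alternant_zero : (alternant a 0).det = ∏ i, ∏ j ∈ Ioi i, (a i - a j) := by
  have hproj : alternant a 0 = Matrix.projVandermonde 1 a := by
    ext i j
    simp [alternant, Matrix.projVandermonde_apply, Fin.val_rev, Nat.sub_sub, add_comm]
  simp [hproj, Matrix.det_projVandermonde]

end Schur

open Schur

theorem stmt10_general (N ℓ : ℕ) (hℓN : ℓ ≤ N) (lam : ℕ → ℕ)
    (hsupp : ∀ i, 0 < lam i ↔ i < ℓ) (a : Fin N → ℂ) :
    Matrix.det (Matrix.of fun i j : Fin ℓ =>
        if (i : ℕ) ≤ lam i + (j : ℕ) then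
          ∑ m ∈ Finset.Nat.antidiagonalTuple N (lam i + (j : ℕ) - (i : ℕ)),
            ∏ s : Fin N, a s ^ m s
        else 0) *
      (∏ i : Fin N, ∏ j ∈ Finset.univ.filter (fun j => i < j), (a i - a j)) =
    Matrix.det (Matrix.of fun i j : Fin N => a i ^ (lam (j : ℕ) + (N - 1 - (j : ℕ)))) := by
  have hlam : ∀ i, ℓ ≤ i → lam i = 0 := fun i hi =>
    Nat.eq_zero_of_not_pos fun hpos => (not_lt.2 hi) ((hsupp i).1 hpos)
  obtain ⟨m, rfl⟩ := Nat.exists_eq_add_of_le hℓN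
  change (jacobiTrudi a lam ℓ).det * _ = (alternant a lam).det
  rw [det_alternant_eq_det_jacobiTrudi_mul, det_jacobiTrudi_add a lam ℓ m hlam,
    det_alternant_zero]
  simp only [filter_lt_eq_Ioi]

/-- Jacobi–Trudi matches the bialternant formula: for a partition `λ` with
`ℓ(λ) ≤ N` and variables `a_1,…,a_N`,
`det(h_{λ_i-i+j})_{1≤i,j≤ℓ(λ)} · Δ(a) = det(a_i^{λ_j-j+N})_{1≤i,j≤N}`, where `h_k`
is the complete homogeneous symmetric polynomial of degree `k` in the `a_i`
(and `h_k = 0` for `k < 0`), and `Δ(a) = ∏_{i<j}(a_i - a_j)`. -/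
theorem stmt10 (N ℓ : ℕ) (hℓN : ℓ ≤ N) (lam : ℕ → ℕ) (hanti : Antitone lam)
    (hsupp : ∀ i, 0 < lam i ↔ i < ℓ) (a : Fin N → ℂ) :
    Matrix.det (Matrix.of fun i j : Fin ℓ =>
        if (i : ℕ) ≤ lam i + (j : ℕ) then
          ∑ m ∈ Finset.Nat.antidiagonalTuple N (lam i + (j : ℕ) - (i : ℕ)),
            ∏ s : Fin N, a s ^ m s
        else 0) *
      (∏ i : Fin N, ∏ j ∈ Finset.univ.filter (fun j => i < j), (a i - a j)) =
    Matrix.det (Matrix.of fun i j : Fin N => a i ^ (lam (j : ℕ) + (N - 1 - (j : ℕ)))) :=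
  stmt10_general N ℓ hℓN lam hsupp a
end
end
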